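/- Let φ = (1+√5)/2 and let γ be the matrix with rows (1/2, −φ/2, 1/(2φ)), (φ/2, 1/(2φ), −1/2), (1/(2φ), 1/2, φ/2). For real numbers a, b, c, d, e, f, set N(x,y,z) = a·yz⁵ + b·y⁵z + c·y³z³ + d·x²yz³ + e·x²y³z + f·x⁴yz and define the vector field Q(x,y,z) = (N(x,y,z), N(y,z,x), N(z,x,y))/(x²+y²+z²)² on ℝ³∖{0}. If Q(γv) = γ·Q(v) for every v ≠ 0, then there exists a constant c₀ ∈ ℝ such that (a,b,c,d,e,f) = c₀·(5−√5, 5+√5, −20, 10+10√5, 10−10√5, −10). In other words, up to a scalar multiple there is a unique vector field of this shape invariant under conjugation with γ. -/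
import Mathlib


/-- The golden ratio. -/
noncomputable def φ : ℝ := (1 + Real.sqrt 5) / 2

/-- The order-5 generator `γ` of the icosahedral group. -/
noncomputable def γmat : Matrix (Fin 3) (Fin 3) ℝ :=
  !![1/2, -φ/2, 1/(2*φ); φ/2, 1/(2*φ), -1/2; 1/(2*φ), 1/2, φ/2]

/-- Uniqueness, up to scalar, of the vector field of the shape
`N(x,y,z) = a·yz⁵ + b·y⁵z + c·y³z³ + d·x²yz³ + e·x²y³z + f·x⁴yz` (taken cyclically with
denominator `(x²+y²+z²)²`) invariant under conjugation with `γ`. -/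
theorem stmt4 (a b c d e f : ℝ) (N : ℝ → ℝ → ℝ → ℝ)
    (hN : ∀ x y z : ℝ, N x y z =
      a * y * z ^ 5 + b * y ^ 5 * z + c * y ^ 3 * z ^ 3 + d * x ^ 2 * y * z ^ 3
        + e * x ^ 2 * y ^ 3 * z + f * x ^ 4 * y * z)
    (QN : (Fin 3 → ℝ) → Fin 3 → ℝ)
    (hQN : ∀ v : Fin 3 → ℝ, QN v = fun i =>
      ![N (v 0) (v 1) (v 2), N (v 1) (v 2) (v 0), N (v 2) (v 0) (v 1)] i
        / ((v 0) ^ 2 + (v 1) ^ 2 + (v 2) ^ 2) ^ 2)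
    (hinv : ∀ v : Fin 3 → ℝ, v ≠ 0 → QN (γmat.mulVec v) = γmat.mulVec (QN v)) :
    ∃ c₀ : ℝ, a = c₀ * (5 - Real.sqrt 5) ∧ b = c₀ * (5 + Real.sqrt 5) ∧ c = c₀ * (-20)
      ∧ d = c₀ * (10 + 10 * Real.sqrt 5) ∧ e = c₀ * (10 - 10 * Real.sqrt 5)
      ∧ f = c₀ * (-10) := by
  have hs : Real.sqrt 5 ^ 2 = 5 := Real.sq_sqrt (by norm_num)
  have hγ : γmat = !![1/2, -(1+Real.sqrt 5)/4, (Real.sqrt 5 - 1)/4;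
      (1+Real.sqrt 5)/4, (Real.sqrt 5 - 1)/4, -1/2;
      (Real.sqrt 5 - 1)/4, 1/2, (1+Real.sqrt 5)/4] := by
    have hφ : (0:ℝ) < 1 + Real.sqrt 5 := by positivity
    have h1 : 1/(2*φ) = (Real.sqrt 5 - 1)/4 := by
      rw [φ]; rw [div_eq_div_iff (by positivity) (by norm_num)]
      linear_combination -hs
    have h2 : -φ/2 = -(1+Real.sqrt 5)/4 := by rw [φ]; ring
    have h3 : φ/2 = (1+Real.sqrt 5)/4 := by rw [φ]; ring
    rw [γmat, h1, h2, h3]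
  have hv1 : (![1,0,0] : Fin 3 → ℝ) ≠ 0 := by
    intro hc; have := congrFun hc 0; norm_num at this
  have hv2 : (![0,1,1] : Fin 3 → ℝ) ≠ 0 := by
    intro hc; have := congrFun hc 1; norm_num at this
  have hE1 : ((1 / 2 * 1 + -(1 + Real.sqrt 5) / 4 * 0 + (Real.sqrt 5 - 1) / 4 * 0) ^ 2 + ((1 + Real.sqrt 5) / 4 * 1 + (Real.sqrt 5 - 1) / 4 * 0 + -1 / 2 * 0) ^ 2 + ((Real.sqrt 5 - 1) / 4 * 1 + 1 / 2 * 0 + (1 + Real.sqrt 5) / 4 * 0) ^ 2 : ℝ) = 1 := by linear_combination (1/8 : ℝ) * hs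
  have hE2 : ((1 / 2 * 0 + -(1 + Real.sqrt 5) / 4 * 1 + (Real.sqrt 5 - 1) / 4 * 1) ^ 2 + ((1 + Real.sqrt 5) / 4 * 0 + (Real.sqrt 5 - 1) / 4 * 1 + -1 / 2 * 1) ^ 2 + ((Real.sqrt 5 - 1) / 4 * 0 + 1 / 2 * 1 + (1 + Real.sqrt 5) / 4 * 1) ^ 2 : ℝ) = 2 := by linear_combination (1/8 : ℝ) * hs
  have h1 := congrFun (hinv ![1,0,0] hv1) 0
  have h2 := congrFun (hinv ![1,0,0] hv1) 1
  have h3 := congrFun (hinv ![1,0,0] hv1) 2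
  have h4 := congrFun (hinv ![0,1,1] hv2) 0
  have h5 := congrFun (hinv ![0,1,1] hv2) 1
  simp only [hQN, hγ, hN, Matrix.mulVec, dotProduct, Fin.sum_univ_three,
    Matrix.cons_val', Matrix.cons_val_zero, Matrix.cons_val_one, Matrix.head_cons,
    Matrix.empty_val', Matrix.cons_val_fin_one, Matrix.head_fin_const, Matrix.of_apply,
    Matrix.cons_val_two, Matrix.tail_cons] at h1 h2 h3 h4 h5
  rw [hE1] at h1 h2 h3
  rw [hE2] at h4 h5
  refine ⟨-f/10, ?_, ?_, ?_, ?_, ?_, by ring⟩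
  · linear_combination ((4) + (4/5) * Real.sqrt 5) * h1 + ((12) + (-4) * Real.sqrt 5) * h2 + ((-16) + (-4) * Real.sqrt 5) * h3 + ((-16) + (-8/5) * Real.sqrt 5) * h4 + ((8/5) * Real.sqrt 5) * h5 + (((103/320) + (491/2048) * Real.sqrt 5 + (15/128) * Real.sqrt 5 ^ 2 + (37/1024) * Real.sqrt 5 ^ 3 + (1/256) * Real.sqrt 5 ^ 4 + (-1/10240) * Real.sqrt 5 ^ 5) * a + ((1321/2560) + (-391/2048) * Real.sqrt 5 + (109/1024) * Real.sqrt 5 ^ 2 + (-13/512) * Real.sqrt 5 ^ 3 + (1/5120) * Real.sqrt 5 ^ 4 + (-1/10240) * Real.sqrt 5 ^ 5) * b + ((17/32) + (259/10240) * Real.sqrt 5 + (-9/1280) * Real.sqrt 5 ^ 2 + (-13/5120) * Real.sqrt 5 ^ 3 + (-1/10240) * Real.sqrt 5 ^ 5) * c + ((9/160) + (13/320) * Real.sqrt 5 + (67/2560) * Real.sqrt 5 ^ 2 + (3/320) * Real.sqrt 5 ^ 3 + (1/512) * Real.sqrt 5 ^ 4) * d + ((141/2560) + (-209/5120) * Real.sqrt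 5 + (67/5120) * Real.sqrt 5 ^ 2 + (-39/5120) * Real.sqrt 5 ^ 3 + (11/5120) * Real.sqrt 5 ^ 4) * e + ((-199/2560) + (71/5120) * Real.sqrt 5 + (-47/5120) * Real.sqrt 5 ^ 2 + (1/5120) * Real.sqrt 5 ^ 3 + (21/5120) * Real.sqrt 5 ^ 4) * f) * hs
  · linear_combination ((2) + (6/5) * Real.sqrt 5) * h1 + ((6) + (2) * Real.sqrt 5) * h2 + ((-12) + (-8) * Real.sqrt 5) * h3 + ((-12) + (-12/5) * Real.sqrt 5) * h4 + ((-4) + (12/5) * Real.sqrt 5) * h5 + (((9233/20480) + (993/4096) * Real.sqrt 5 + (275/2048) * Real.sqrt 5 ^ 2 + (83/2048) * Real.sqrt 5 ^ 3 + (29/4096) * Real.sqrt 5 ^ 4 + (-3/20480) * Real.sqrt 5 ^ 5) * a + ((5347/20480) + (-183/4096) * Real.sqrt 5 + (77/2048) * Real.sqrt 5 ^ 2 + (-1/2048) * Real.sqrt 5 ^ 3 + (-69/20480) * Real.sqrt 5 ^ 4 + (-3/20480) * Real.sqrt 5 ^ 5) * b + ((1885/4096) + (1937/20480) * Real.sqrt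 5 + (-43/10240) * Real.sqrt 5 ^ 2 + (-39/10240) * Real.sqrt 5 ^ 3 + (1/4096) * Real.sqrt 5 ^ 4 + (-3/20480) * Real.sqrt 5 ^ 5) * c + ((277/5120) + (137/5120) * Real.sqrt 5 + (111/5120) * Real.sqrt 5 ^ 2 + (47/5120) * Real.sqrt 5 ^ 3 + (1/256) * Real.sqrt 5 ^ 4) * d + ((671/10240) + (-141/5120) * Real.sqrt 5 + (7/1280) * Real.sqrt 5 ^ 2 + (-11/5120) * Real.sqrt 5 ^ 3 + (-7/10240) * Real.sqrt 5 ^ 4) * e + ((-599/10240) + (-69/1280) * Real.sqrt 5 + (27/5120) * Real.sqrt 5 ^ 2 + (-19/1280) * Real.sqrt 5 ^ 3 + (33/10240) * Real.sqrt 5 ^ 4) * f) * hs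
  · linear_combination ((-8) + (-4) * Real.sqrt 5) * h1 + ((-28)) * h2 + ((48) + (20) * Real.sqrt 5) * h3 + ((40) + (8) * Real.sqrt 5) * h4 + ((8) + (-8) * Real.sqrt 5) * h5 + (((-2901/2048) + (-1555/2048) * Real.sqrt 5 + (-425/1024) * Real.sqrt 5 ^ 2 + (-127/1024) * Real.sqrt 5 ^ 3 + (-41/2048) * Real.sqrt 5 ^ 4 + (1/2048) * Real.sqrt 5 ^ 5) * a + ((-2919/2048) + (545/2048) * Real.sqrt 5 + (-205/1024) * Real.sqrt 5 ^ 2 + (23/1024) * Real.sqrt 5 ^ 3 + (17/2048) * Real.sqrt 5 ^ 4 + (1/2048) * Real.sqrt 5 ^ 5) * b + ((-3373/2048) + (-491/2048) * Real.sqrt 5 + (15/1024) * Real.sqrt 5 ^ 2 + (13/1024) * Real.sqrt 5 ^ 3 + (-1/2048) * Real.sqrt 5 ^ 4 + (1/2048) * Real.sqrt 5 ^ 5) * c + ((-83/512) + (-3/32) * Real.sqrt 5 + (-5/64) * Real.sqrt 5 ^ 2 + (-1/32) * Real.sqrt 5 ^ 3 + (-5/512) * Real.sqrt 5 ^ 4)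 * d + ((-187/1024) + (49/512) * Real.sqrt 5 + (-5/256) * Real.sqrt 5 ^ 2 + (7/512) * Real.sqrt 5 ^ 3 + (-1/1024) * Real.sqrt 5 ^ 4) * e + ((303/1024) + (41/512) * Real.sqrt 5 + (3/256) * Real.sqrt 5 ^ 2 + (15/512) * Real.sqrt 5 ^ 3 + (-11/1024) * Real.sqrt 5 ^ 4) * f) * hs
  · linear_combination ((6) + (-6) * Real.sqrt 5) * h1 + ((2) + (22) * Real.sqrt 5) * h2 + ((2) + (-10) * Real.sqrt 5) * h3 + ((8) + (-8) * Real.sqrt 5) * h4 + (0) * h5 + (((-281/1024) + (75/512) * Real.sqrt 5 + (15/512) * Real.sqrt 5 ^ 2 + (1/16) * Real.sqrt 5 ^ 3 + (3/1024) * Real.sqrt 5 ^ 4 + (1/512) * Real.sqrt 5 ^ 5) * a + ((-275/1024) + (45/128) * Real.sqrt 5 + (-25/128) * Real.sqrt 5 ^ 2 + (47/512) * Real.sqrt 5 ^ 3 + (-13/1024) * Real.sqrt 5 ^ 4 + (1/512) * Real.sqrt 5 ^ 5) * b + ((-139/512) + (135/512) * Real.sqrt 5 + (-1/64) * Real.sqrt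 5 ^ 2 + (-1/128) * Real.sqrt 5 ^ 3 + (-1/512) * Real.sqrt 5 ^ 4 + (1/512) * Real.sqrt 5 ^ 5) * c + ((-239/1024) + (1/256) * Real.sqrt 5 + (-19/512) * Real.sqrt 5 ^ 2 + (3/256) * Real.sqrt 5 ^ 3 + (5/1024) * Real.sqrt 5 ^ 4) * d + ((-33/1024) + (23/512) * Real.sqrt 5 + (-5/256) * Real.sqrt 5 ^ 2 + (9/512) * Real.sqrt 5 ^ 3 + (-11/1024) * Real.sqrt 5 ^ 4) * e + ((-7/32) + (-95/512) * Real.sqrt 5 + (-21/512) * Real.sqrt 5 ^ 2 + (-25/512) * Real.sqrt 5 ^ 3 + (-3/512) * Real.sqrt 5 ^ 4) * f) * hs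
  · linear_combination ((6) + (6) * Real.sqrt 5) * h1 + ((-2) + (-10) * Real.sqrt 5) * h2 + ((-2) + (22) * Real.sqrt 5) * h3 + ((8) + (8) * Real.sqrt 5) * h4 + (0) * h5 + (((-275/1024) + (-45/128) * Real.sqrt 5 + (-25/128) * Real.sqrt 5 ^ 2 + (-47/512) * Real.sqrt 5 ^ 3 + (-13/1024) * Real.sqrt 5 ^ 4 + (-1/512) * Real.sqrt 5 ^ 5) * a + ((-281/1024) + (-75/512) * Real.sqrt 5 + (15/512) * Real.sqrt 5 ^ 2 + (-1/16) * Real.sqrt 5 ^ 3 + (3/1024) * Real.sqrt 5 ^ 4 + (-1/512) * Real.sqrt 5 ^ 5) * b + ((-139/512) + (-135/512) * Real.sqrt 5 + (-1/64) * Real.sqrt 5 ^ 2 + (1/128) * Real.sqrt 5 ^ 3 + (-1/512) * Real.sqrt 5 ^ 4 + (-1/512) * Real.sqrt 5 ^ 5) * c + ((-33/1024) + (-23/512) * Real.sqrt 5 + (-5/256) * Real.sqrt 5 ^ 2 + (-9/512) * Real.sqrt 5 ^ 3 + (-11/1024) * Real.sqrt 5 ^ 4) * d + ((-239/1024) + (-1/256)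 * Real.sqrt 5 + (-19/512) * Real.sqrt 5 ^ 2 + (-3/256) * Real.sqrt 5 ^ 3 + (5/1024) * Real.sqrt 5 ^ 4) * e + ((-7/32) + (95/512) * Real.sqrt 5 + (-21/512) * Real.sqrt 5 ^ 2 + (25/512) * Real.sqrt 5 ^ 3 + (-3/512) * Real.sqrt 5 ^ 4) * f) * hs
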